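/- Let Q be a rack. The map r^n sending a Yang-Baxter n-cochain f to its quasi-diagonal part (keeping entries with x_i ≡ y_i for all i, setting others to zero) commutes with each partial coboundary d_i^n, hence with d^n; it is a retraction of cochain complexes onto the quasi-diagonal subcomplex, so quasi-diagonal cohomology is a direct summand of Yang-Baxter cohomology. -/

import Mathlib

/-!
Right translations of a rack are bijective and self-distributivity reads
`ρ(x^b) ∘ ρ(b) = ρ(b) ∘ ρ(x)`, so `x^b ≡ y^b` iff `x ≡ y`. Hence in the two terms of
`d_i f` at `(x, y)` the argument tuples are quasi-diagonal exactly when `(x, y)` is, as soon as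
the Kronecker delta of that term is nonzero: `δ(x_i, y_i)` forces `x_i = y_i` directly, and
`δ(x_i^{x_{i+1}⋯x_n}, y_i^{y_{i+1}⋯y_n})` forces it once `x_j ≡ y_j` for `j > i`, because
acting by behaviourally equivalent elements is the same injective map.
-/

open scoped Classical

variable {Q : Type*}

/-- A rack: every right translation is a bijection, and self-distributivity holds. -/
def IsRack (op : Q → Q → Q) : Prop :=
  (∀ y : Q, Function.Bijective fun x => op x y) ∧
    ∀ a b c : Q, op (op a b) c = op (op a c) (op b c)

/-- Behavioural equivalence: `x ≡ y` iff `a ∗ x = a ∗ y` for all `a`. -/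
def behEq (op : Q → Q → Q) (x y : Q) : Prop := ∀ a : Q, op a x = op a y

noncomputable section

variable {A : Type*} [CommRing A]

/-- The iterated action `x_i ^ (x_{i+1} ⋯ x_n)`. -/
def opChain (op : Q → Q → Q) {n : ℕ} (x : Fin (n + 1) → Q) (i : Fin (n + 1)) : Q :=
  ((List.finRange (n + 1)).filter fun j => i < j).foldl (fun a j => op a (x j)) (x i)

/-- The partial Yang-Baxter coboundary `d_i^n`. -/
def dpart (op : Q → Q → Q) {n : ℕ} (i : Fin (n + 1))
    (f : (Fin n → Q) → (Fin n → Q) → A) :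
    (Fin (n + 1) → Q) → (Fin (n + 1) → Q) → A := fun x y =>
  f (x ∘ i.succAbove) (y ∘ i.succAbove) *
      (if opChain op x i = opChain op y i then (1 : A) else 0) -
    f (fun j => if i.succAbove j < i then op (x (i.succAbove j)) (x i) else x (i.succAbove j))
      (fun j => if i.succAbove j < i then op (y (i.succAbove j)) (y i) else y (i.succAbove j)) *
      (if x i = y i then (1 : A) else 0)

/-- The Yang-Baxter coboundary `d^n = Σ (-1)^i d_i^n`. -/
def dYB (op : Q → Q → Q) {n : ℕ} (f : (Fin n → Q) → (Fin n → Q) → A) :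
    (Fin (n + 1) → Q) → (Fin (n + 1) → Q) → A := fun x y =>
  ∑ i : Fin (n + 1), (-1 : A) ^ (i : ℕ) * dpart op i f x y

end

noncomputable section
variable {A : Type*} [CommRing A]

/-- A matrix is quasi-diagonal if its entries vanish whenever `x i ≢ y i` for some `i`. -/
def IsQDiag (op : Q → Q → Q) {n : ℕ} (f : (Fin n → Q) → (Fin n → Q) → A) : Prop :=
  ∀ x y : Fin n → Q, (∃ i, ¬ behEq op (x i) (y i)) → f x y = 0

/-- The projection `r^n` onto the quasi-diagonal part of a cochain. -/
def rQDiag (op : Q → Q → Q) {n : ℕ} (f : (Fin n → Q) → (Fin n → Q) → A) :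
    (Fin n → Q) → (Fin n → Q) → A := fun x y =>
  if ∀ i, behEq op (x i) (y i) then f x y else 0

lemma behEq_op_right_iff {op : Q → Q → Q} (h : IsRack op) {x y : Q} (b : Q) :
    behEq op (op x b) (op y b) ↔ behEq op x y := by
  have key : ∀ a, op (op a b) (op x b) = op (op a b) (op y b) ↔ op a x = op a y := fun a => by
    rw [← h.2, ← h.2]
    exact (h.1 b).1.eq_iff
  unfold behEq
  rw [(h.1 b).2.forall]
  exact forall_congr' key

lemma foldl_op_congr (op : Q → Q → Q) {ι : Type*} {x y : ι → Q} {L : List ι}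
    (hL : ∀ j ∈ L, behEq op (x j) (y j)) (s : Q) :
    L.foldl (fun a j => op a (x j)) s = L.foldl (fun a j => op a (y j)) s := by
  induction L generalizing s with
  | nil => rfl
  | cons j L ih =>
    simp only [List.foldl_cons]
    rw [hL j List.mem_cons_self]
    exact ih (fun k hk => hL k (List.mem_cons_of_mem j hk)) _

lemma foldl_op_injective {op : Q → Q → Q} (hinj : ∀ b, Function.Injective fun a => op a b)
    {ι : Type*} (x : ι → Q) (L : List ι) :
    Function.Injective fun s => L.foldl (fun a j => op a (x j)) s := by
  induction L with
  | nil => exact fun _ _ hab => hab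
  | cons j L ih => exact fun _ _ hab => hinj (x j) (ih hab)

lemma eq_of_opChain_eq {op : Q → Q → Q} (h : IsRack op) {n : ℕ} {x y : Fin (n + 1) → Q}
    {i : Fin (n + 1)} (hlater : ∀ j, i < j → behEq op (x j) (y j))
    (hchain : opChain op x i = opChain op y i) : x i = y i := by
  unfold opChain at hchain
  rw [foldl_op_congr op (fun j hj a => (hlater j (by simpa using hj) a).symm)] at hchain
  exact foldl_op_injective (fun b => (h.1 b).1) x _ hchain

lemma forall_behEq_succAbove_iff_of_opChain_eq {op : Q → Q → Q} (h : IsRack op) {n : ℕ}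
    {x y : Fin (n + 1) → Q} {i : Fin (n + 1)} (hchain : opChain op x i = opChain op y i) :
    (∀ k, behEq op (x (i.succAbove k)) (y (i.succAbove k))) ↔ ∀ j, behEq op (x j) (y j) := by
  refine ⟨fun hk => (Fin.forall_iff_succAbove i).2 ⟨?_, hk⟩, fun hall k => hall _⟩
  have hlater : ∀ j, i < j → behEq op (x j) (y j) := fun j hj => by
    obtain ⟨k, rfl⟩ := Fin.exists_succAbove_eq hj.ne'
    exact hk k
  rw [eq_of_opChain_eq h hlater hchain]
  exact fun _ => rfl

def actFace (op : Q → Q → Q) {n : ℕ} (i : Fin (n + 1)) (x : Fin (n + 1) → Q) : Fin n → Q :=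
  fun j => if i.succAbove j < i then op (x (i.succAbove j)) (x i) else x (i.succAbove j)

lemma dpart_apply (op : Q → Q → Q) {n : ℕ} (i : Fin (n + 1))
    (f : (Fin n → Q) → (Fin n → Q) → A) (x y : Fin (n + 1) → Q) :
    dpart op i f x y =
      f (x ∘ i.succAbove) (y ∘ i.succAbove) *
          (if opChain op x i = opChain op y i then (1 : A) else 0) -
        f (actFace op i x) (actFace op i y) * (if x i = y i then (1 : A) else 0) :=
  rfl

lemma forall_behEq_actFace_iff {op : Q → Q → Q} (h : IsRack op) {n : ℕ}
    {x y : Fin (n + 1) → Q} {i : Fin (n + 1)} (hi : x i = y i) :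
    (∀ k, behEq op (actFace op i x k) (actFace op i y k)) ↔ ∀ j, behEq op (x j) (y j) := by
  have hk : ∀ k, behEq op (actFace op i x k) (actFace op i y k) ↔
      behEq op (x (i.succAbove k)) (y (i.succAbove k)) := by
    intro k
    simp only [actFace, hi]
    split_ifs
    exacts [behEq_op_right_iff h _, Iff.rfl]
  rw [forall_congr' hk, Fin.forall_iff_succAbove i (P := fun j => behEq op (x j) (y j)), hi]
  exact (and_iff_right fun _ => rfl).symm

lemma rQDiag_mul_ite (op : Q → Q → Q) {m : ℕ} (f : (Fin m → Q) → (Fin m → Q) → A)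
    (u v : Fin m → Q) {P R : Prop} [Decidable P] [Decidable R]
    (hP : P → ((∀ k, behEq op (u k) (v k)) ↔ R)) :
    rQDiag op f u v * (if P then (1 : A) else 0) =
      if R then f u v * (if P then (1 : A) else 0) else 0 := by
  by_cases hp : P
  · simp only [rQDiag, hP hp, if_pos hp, mul_one]
  · simp [hp]

lemma dpart_rQDiag {op : Q → Q → Q} (h : IsRack op) {n : ℕ} (i : Fin (n + 1))
    (f : (Fin n → Q) → (Fin n → Q) → A) :
    dpart op i (rQDiag op f) = rQDiag op (dpart op i f) := by
  funext x y
  rw [dpart_apply, rQDiag_mul_ite op f (x ∘ i.succAbove) (y ∘ i.succAbove)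
      (forall_behEq_succAbove_iff_of_opChain_eq h),
    rQDiag_mul_ite op f _ _ (forall_behEq_actFace_iff h), ite_sub_ite, sub_zero]
  rfl

lemma dYB_rQDiag {op : Q → Q → Q} (h : IsRack op) {n : ℕ}
    (f : (Fin n → Q) → (Fin n → Q) → A) :
    dYB op (rQDiag op f) = rQDiag op (dYB op f) := by
  funext x y
  simp only [dYB, dpart_rQDiag h, rQDiag]
  split_ifs <;> simp

lemma isQDiag_rQDiag (op : Q → Q → Q) {n : ℕ} (f : (Fin n → Q) → (Fin n → Q) → A) :
    IsQDiag op (rQDiag op f) :=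
  fun _ _ ⟨i, hi⟩ => if_neg fun hall => hi (hall i)

lemma rQDiag_eq_self_of_isQDiag {op : Q → Q → Q} {n : ℕ}
    {f : (Fin n → Q) → (Fin n → Q) → A} (hf : IsQDiag op f) : rQDiag op f = f := by
  funext x y
  by_cases hxy : ∀ j, behEq op (x j) (y j)
  · exact if_pos hxy
  · rw [rQDiag, if_neg hxy, hf x y (not_forall.mp hxy)]

/-- The quasi-diagonal projection commutes with each partial coboundary `d_i^n`, hence
with `d^n`; it is a retraction of cochain complexes onto the quasi-diagonal subcomplex,
so quasi-diagonal cohomology is a direct summand of Yang-Baxter cohomology. -/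
theorem rQDiag_retraction (op : Q → Q → Q) (h : IsRack op) {n : ℕ}
    (f : (Fin n → Q) → (Fin n → Q) → A) :
    (∀ i : Fin (n + 1), dpart op i (rQDiag op f) = rQDiag op (dpart op i f)) ∧
      dYB op (rQDiag op f) = rQDiag op (dYB op f) ∧
      IsQDiag op (rQDiag op f) ∧
      (IsQDiag op f → rQDiag op f = f) :=
  ⟨fun i => dpart_rQDiag h i f, dYB_rQDiag h f, isQDiag_rQDiag op f,
    rQDiag_eq_self_of_isQDiag⟩

end
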